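/- arXiv:2307.04506 — 6 statements merged into one kernel-verified Lean document; each statement's English description precedes it below -/
import Mathlib

section
/- In any optimal solution maximizing the total traffic rate TR(p) = Σ_i μT_i/(T_i+μ), for every source s_i either all users of s_i choose the direct path (u_i = n_i) or no user relays through s_i (v_i = 0), or both. -/
/-!
Suppose some user of `s_i` relays via `s_l` while some user of `s_j` relays via `s_i`. Let the
first user go direct and the second relay via `s_l` instead (or go direct if `j = l`). Link `l`
loses one relayed flow and gains one (or a direct one), so its traffic does not drop, while link
`i` trades a relayed flow for a direct one and gains `q φ > 0`. Since `t ↦ μ t / (t + μ)` is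
strictly increasing, the total traffic strictly increases, so the profile was not optimal.
-/

open Finset

/-- A pure routing profile in the loss network with `m` sources, where source `i`
has `n i` users: `u i` users at source `i` choose the direct path, and `r i j`
users at source `i` relay through source `j` (indirect path `(s_i, s_j, d)`). -/
structure Profile (m : ℕ) (n : Fin m → ℕ) where
  u : Fin m → ℕ
  r : Fin m → Fin m → ℕ
  diag : ∀ i, r i i = 0
  total : ∀ i, u i + ∑ j, r i j = n i

namespace Profile

variable {m : ℕ} {n : Fin m → ℕ}

/-- Number of users relaying through source `j`. -/
def v (p : Profile m n) (j : Fin m) : ℕ := ∑ i, p.r i j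

/-- Traffic rate on the direct link `(s_i, d)`: `T_i = u_i φ + v_i q̄ φ`,
where `q̄` is the sidelink success probability. -/
noncomputable def T (φ qb : ℝ) (p : Profile m n) (i : Fin m) : ℝ :=
  (p.u i : ℝ) * φ + (p.v i : ℝ) * qb * φ

/-- Total traffic rate arriving at the destination: `TR = Σ_i μ T_i/(T_i + μ)`. -/
noncomputable def TR (φ qb μ : ℝ) (p : Profile m n) : ℝ :=
  ∑ i, μ * p.T φ qb i / (p.T φ qb i + μ)

/-- Nash equilibrium: no single user can strictly decrease its loss rate by a
unilateral change of route.  A direct user at `s_i` (present iff `u i > 0`) may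
deviate to the indirect path via any `j ≠ i`; a user at `s_i` relaying via `l`
(present iff `r i l > 0`) may deviate to its direct path or to the indirect path
via any other `j`.  Loss rates follow the loss-network formulas, with the traffic
of the target link adjusted for the deviating user's own flow. -/
noncomputable def isNE (φ q μ : ℝ) (p : Profile m n) : Prop :=
  (∀ i j : Fin m, j ≠ i → 0 < p.u i →
      φ * p.T φ (1 - q) i / (p.T φ (1 - q) i + μ) ≤
        q * φ + (1 - q) * φ * (p.T φ (1 - q) j + (1 - q) * φ) /
          (p.T φ (1 - q) j + (1 - q) * φ + μ)) ∧
  (∀ i l : Fin m, l ≠ i → 0 < p.r i l →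
      (q * φ + (1 - q) * φ * p.T φ (1 - q) l / (p.T φ (1 - q) l + μ) ≤
        φ * (p.T φ (1 - q) i + φ) / (p.T φ (1 - q) i + φ + μ)) ∧
      (∀ j : Fin m, j ≠ i → j ≠ l →
        q * φ + (1 - q) * φ * p.T φ (1 - q) l / (p.T φ (1 - q) l + μ) ≤
          q * φ + (1 - q) * φ * (p.T φ (1 - q) j + (1 - q) * φ) /
            (p.T φ (1 - q) j + (1 - q) * φ + μ)))

end Profile

lemma strictMonoOn_mul_div_add {μ : ℝ} (hμ : 0 < μ) :
    StrictMonoOn (fun t : ℝ => μ * t / (t + μ)) (Set.Ioi (-μ)) := by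
  intro x hx y hy hxy
  have hx' : 0 < x + μ := neg_lt_iff_pos_add.mp hx
  have hy' : 0 < y + μ := neg_lt_iff_pos_add.mp hy
  rw [div_lt_div_iff₀ hx' hy']
  nlinarith [mul_lt_mul_of_pos_left hxy (mul_pos hμ hμ)]

namespace Profile

variable {m : ℕ} {n : Fin m → ℕ}

-- Route `a` of source `a` encodes its direct path.
def route (p : Profile m n) (a x : Fin m) : ℕ := if x = a then p.u a else p.r a x

lemma route_eq_add (p : Profile m n) (a x : Fin m) :
    p.route a x = (if x = a then p.u a else 0) + p.r a x := by
  unfold route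
  split_ifs with h
  · simp [h, p.diag]
  · simp

lemma route_of_ne (p : Profile m n) {a x : Fin m} (h : x ≠ a) : p.route a x = p.r a x :=
  if_neg h

lemma sum_route (p : Profile m n) (a : Fin m) : ∑ x, p.route a x = n a := by
  simp only [route_eq_add, sum_add_distrib, sum_ite_eq', mem_univ, if_true, p.total]

def ofRoute (c : Fin m → Fin m → ℕ) (hc : ∀ a, ∑ x, c a x = n a) : Profile m n where
  u a := c a a
  r a x := if x = a then 0 else c a x
  diag _ := if_pos rfl
  total a := by
    rw [← hc a, Fintype.sum_eq_add_sum_compl a (c a), Fintype.sum_eq_add_sum_compl a, if_pos rfl,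
      zero_add]
    exact congrArg _ (sum_congr rfl fun x hx => if_neg (by simpa using hx))

@[simp]
lemma route_ofRoute (c : Fin m → Fin m → ℕ) (hc : ∀ a, ∑ x, c a x = n a) :
    (ofRoute c hc).route = c := by
  ext a x
  by_cases h : x = a
  · subst h; simp [route, ofRoute]
  · simp [route, ofRoute, h]

def routeWeight (qb : ℝ) (a x : Fin m) : ℝ := if x = a then 1 else qb

lemma T_eq_sum_route (φ qb : ℝ) (p : Profile m n) (x : Fin m) :
    p.T φ qb x = φ * ∑ a, routeWeight qb a x * p.route a x := by
  have h : ∀ a, routeWeight qb a x * p.route a x =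
      (if a = x then (p.u x : ℝ) else 0) + qb * p.r a x := by
    intro a
    unfold routeWeight route
    by_cases hax : a = x
    · subst hax; simp [p.diag]
    · simp [hax, Ne.symm hax]
  simp only [h, sum_add_distrib, sum_ite_eq', mem_univ, if_true, ← mul_sum, T, v, Nat.cast_sum]
  ring

-- Moving one user of source `a` from route `k` to route `k'`, stated without truncated subtraction.
lemma exists_move (p : Profile m n) {a k : Fin m} (hk : 0 < p.route a k) (k' : Fin m) :
    ∃ p' : Profile m n, ∀ b x,
      p'.route b x + (if b = a ∧ x = k then 1 else 0) =
        p.route b x + (if b = a ∧ x = k' then 1 else 0) := by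
  set δ : Fin m → Fin m → Fin m → ℕ := fun y b x => if b = a ∧ x = y then 1 else 0
  have hδ : ∀ y b, ∑ x, δ y b x = if b = a then 1 else 0 := by
    intro y b
    by_cases hb : b = a <;> simp [δ, hb]
  have hδk : ∀ b x, δ k b x ≤ p.route b x := by
    intro b x
    by_cases h : b = a ∧ x = k
    · obtain ⟨rfl, rfl⟩ := h
      simp only [δ, and_self, if_true]
      exact hk
    · simp [δ, h]
  obtain ⟨c, hc⟩ : ∃ c : Fin m → Fin m → ℕ, ∀ b x, c b x + δ k b x = p.route b x + δ k' b x :=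
    ⟨fun b x => p.route b x - δ k b x + δ k' b x, fun b x => by have := hδk b x; dsimp only; omega⟩
  refine ⟨ofRoute c fun b => ?_, by simpa using hc⟩
  have := sum_congr rfl fun x (_ : x ∈ univ) => hc b x
  rw [sum_add_distrib, sum_add_distrib, hδ, hδ, sum_route] at this
  omega

lemma T_add_of_route_add (φ qb : ℝ) {p p' : Profile m n} {a k k' : Fin m}
    (h : ∀ b x, p'.route b x + (if b = a ∧ x = k then 1 else 0) =
      p.route b x + (if b = a ∧ x = k' then 1 else 0)) (x : Fin m) :
    p'.T φ qb x + (if x = k then φ * routeWeight qb a k else 0) =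
      p.T φ qb x + (if x = k' then φ * routeWeight qb a k' else 0) := by
  have key : ∀ b, routeWeight qb b x * p'.route b x +
      (if b = a ∧ x = k then routeWeight qb a k else 0) =
        routeWeight qb b x * p.route b x + (if b = a ∧ x = k' then routeWeight qb a k' else 0) := by
    intro b
    have e : ∀ y, (if b = a ∧ x = y then routeWeight qb a y else 0) =
        routeWeight qb b x * ((if b = a ∧ x = y then 1 else 0 : ℕ) : ℝ) := by
      intro y
      split_ifs with hy
      · obtain ⟨rfl, rfl⟩ := hy
        simp
      · simp
    rw [e k, e k', ← mul_add, ← mul_add, ← Nat.cast_add, ← Nat.cast_add, h b x]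
  have hsum := sum_congr rfl fun b (_ : b ∈ univ) => key b
  simp only [sum_add_distrib, ite_and, sum_ite_eq', mem_univ, if_true] at hsum
  rw [T_eq_sum_route, T_eq_sum_route]
  split_ifs at hsum ⊢ <;> linear_combination φ * hsum

lemma exists_T_le_of_relay_via_relay {φ qb : ℝ} (hφ : 0 < φ) (hqb : qb < 1) (p : Profile m n)
    {i j l : Fin m} (hli : l ≠ i) (hji : j ≠ i) (hl : 0 < p.r i l) (hj : 0 < p.r j i) :
    ∃ p' : Profile m n, (∀ x, p.T φ qb x ≤ p'.T φ qb x) ∧ p.T φ qb i < p'.T φ qb i := by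
  obtain ⟨p₁, h₁⟩ := p.exists_move (a := i) (k := l) (by rwa [p.route_of_ne hli]) i
  have hj₁ : 0 < p₁.route j i := by
    have := h₁ j i
    simp only [hji, false_and, if_false, add_zero] at this
    rwa [this, p.route_of_ne hji.symm]
  obtain ⟨p₂, h₂⟩ := p₁.exists_move hj₁ l
  have hwil : routeWeight qb i l = qb := if_neg hli
  have hwii : routeWeight qb i i = 1 := if_pos rfl
  have hwji : routeWeight qb j i = qb := if_neg hji.symm
  have hwjl : qb ≤ routeWeight qb j l := by
    unfold routeWeight
    split_ifs <;> linarith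
  refine ⟨p₂, fun x => ?_, ?_⟩
  · have e₁ := T_add_of_route_add φ qb h₁ x
    have e₂ := T_add_of_route_add φ qb h₂ x
    split_ifs at e₁ e₂ <;> nlinarith
  · have e₁ := T_add_of_route_add φ qb h₁ i
    have e₂ := T_add_of_route_add φ qb h₂ i
    simp only [hli.symm, if_true, if_false] at e₁ e₂
    nlinarith

lemma T_nonneg {φ qb : ℝ} (hφ : 0 ≤ φ) (hqb : 0 ≤ qb) (p : Profile m n) (x : Fin m) :
    0 ≤ p.T φ qb x := by
  unfold T
  positivity

lemma exists_r_pos_of_u_ne (p : Profile m n) {i : Fin m} (h : p.u i ≠ n i) :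
    ∃ l, l ≠ i ∧ 0 < p.r i l := by
  have : ∑ l, p.r i l ≠ 0 := by
    have := p.total i
    omega
  obtain ⟨l, -, hl⟩ := exists_ne_zero_of_sum_ne_zero this
  exact ⟨l, fun h => hl (h ▸ p.diag i), Nat.pos_of_ne_zero hl⟩

lemma exists_r_pos_of_v_ne_zero (p : Profile m n) {i : Fin m} (h : p.v i ≠ 0) :
    ∃ j, j ≠ i ∧ 0 < p.r j i := by
  obtain ⟨j, -, hj⟩ := exists_ne_zero_of_sum_ne_zero h
  exact ⟨j, fun h => hj (h ▸ p.diag i), Nat.pos_of_ne_zero hj⟩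

lemma TR_lt_TR {φ qb μ : ℝ} (hμ : 0 < μ) {p p' : Profile m n}
    (h₀ : ∀ x, 0 ≤ p.T φ qb x) (hle : ∀ x, p.T φ qb x ≤ p'.T φ qb x) {i : Fin m}
    (hlt : p.T φ qb i < p'.T φ qb i) : p.TR φ qb μ < p'.TR φ qb μ := by
  have mem : ∀ x, p.T φ qb x ∈ Set.Ioi (-μ) := fun x => by
    simpa using (neg_neg_of_pos hμ).trans_le (h₀ x)
  have mem' : ∀ x, p'.T φ qb x ∈ Set.Ioi (-μ) := fun x => by
    simpa using (neg_neg_of_pos hμ).trans_le ((h₀ x).trans (hle x))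
  refine sum_lt_sum (fun x _ => ?_) ⟨i, mem_univ i, ?_⟩
  · exact (strictMonoOn_mul_div_add hμ).monotoneOn (mem x) (mem' x) (hle x)
  · exact strictMonoOn_mul_div_add hμ (mem i) (mem' i) hlt

end Profile

/-- In any optimal solution maximizing the total traffic rate, for every source
`s_i` either all its users choose the direct path (`u i = n i`) or no user relays
through it (`v i = 0`), or both. -/
theorem opt_direct_or_no_relay {m : ℕ} {n : Fin m → ℕ} (φ μ q : ℝ)
    (hφ : 0 < φ) (hμ : 0 < μ) (hq0 : 0 < q) (hq1 : q ≤ 1)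
    (p : Profile m n)
    (hopt : ∀ p' : Profile m n, p'.TR φ (1 - q) μ ≤ p.TR φ (1 - q) μ) :
    ∀ i : Fin m, p.u i = n i ∨ p.v i = 0 := by
  intro i
  by_contra! h
  obtain ⟨l, hli, hl⟩ := p.exists_r_pos_of_u_ne h.1
  obtain ⟨j, hji, hj⟩ := p.exists_r_pos_of_v_ne_zero h.2
  obtain ⟨p', hle, hlt⟩ :=
    p.exists_T_le_of_relay_via_relay hφ (show 1 - q < 1 by linarith) hli hji hl hj
  have hT₀ := p.T_nonneg hφ.le (show 0 ≤ 1 - q by linarith)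
  exact (hopt p').not_gt (Profile.TR_lt_TR hμ hT₀ hle hlt)
end

section
/- If q = 0 (lossless sidelinks), a strategy profile is optimal if and only if the numbers of users choosing each source are balanced: |y_i - y_j| ≤ 1 for all i,j ∈ [m], where y_i = u_i + v_i. -/
/-!
Since `μ > 0`, maximizing the traffic means minimizing `∑ i, f (y i)` for
`f k = μ / (k φ + μ)`, whose forward differences are strictly increasing. If `y j + 2 ≤ y i`,
moving one user from `i` to `j` changes the sum by `Δf (y j) - Δf (y i - 1) < 0`. Conversely, a
balanced `y` takes only the values `a = min y` and `a + 1`, where `f` agrees with the line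
through `(a, f a)` and `(a + 1, f (a + 1))`; by convexity this line lies below `f` at every
natural number, and its sum over a profile depends only on `∑ i, y i`.
-/

open Finset fwdDiff

section DiscreteConvexity

variable {f : ℕ → ℝ}

theorem le_add_mul_fwdDiff_of_monotone (hf : Monotone (Δ_[1] f)) (a k : ℕ) :
    f a + ((k : ℝ) - a) * Δ_[1] f a ≤ f k := by
  rcases le_total a k with hak | hka
  · induction k, hak using Nat.le_induction with
    | base => simp
    | succ k hak ih =>
      have step : f (k + 1) = f k + Δ_[1] f k := by simp [fwdDiff]
      have hmono : Δ_[1] f a ≤ Δ_[1] f k := hf hak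
      push_cast
      linarith
  · suffices f a ≤ f k + ((a : ℝ) - k) * Δ_[1] f a by linarith
    induction a, hka using Nat.le_induction with
    | base => simp
    | succ a hka ih =>
      have step : f (a + 1) = f a + Δ_[1] f a := by simp [fwdDiff]
      have hmono : Δ_[1] f a ≤ Δ_[1] f (a + 1) := hf (Nat.le_succ a)
      have hcoef : (0 : ℝ) ≤ a + 1 - k := by
        have : (k : ℝ) ≤ a := by exact_mod_cast hka
        linarith
      push_cast
      nlinarith [mul_le_mul_of_nonneg_left hmono hcoef]

variable {ι : Type*} [Fintype ι]

theorem sum_le_sum_of_forall_le_add_one (hf : Monotone (Δ_[1] f)) {y : ι → ℕ}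
    (hy : ∀ i j, y i ≤ y j + 1) {y' : ι → ℕ} (hsum : ∑ i, y' i = ∑ i, y i) :
    ∑ i, f (y i) ≤ ∑ i, f (y' i) := by
  cases isEmpty_or_nonempty ι
  · simp
  obtain ⟨i₀, -, hmin⟩ := exists_min_image univ y univ_nonempty
  set a := y i₀
  set line : ℕ → ℝ := fun k ↦ f a + ((k : ℝ) - a) * Δ_[1] f a
  have on_line : ∀ i, f (y i) = line (y i) := by
    intro i
    rcases (by have := hy i i₀; have := hmin i (mem_univ i); omega : y i = a ∨ y i = a + 1)
      with h | h <;> simp [line, h, fwdDiff]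
  have line_sum : ∀ z : ι → ℕ, ∑ i, line (z i) =
      Fintype.card ι * (f a - a * Δ_[1] f a) + (∑ i, z i : ℕ) * Δ_[1] f a := by
    intro z
    simp only [line, sum_add_distrib, sub_mul, sum_sub_distrib, ← sum_mul, sum_const, card_univ,
      nsmul_eq_mul, Nat.cast_sum]
    ring
  calc ∑ i, f (y i) = ∑ i, line (y i) := sum_congr rfl fun i _ ↦ on_line i
    _ = ∑ i, line (y' i) := by rw [line_sum, line_sum, hsum]
    _ ≤ ∑ i, f (y' i) := sum_le_sum fun i _ ↦ le_add_mul_fwdDiff_of_monotone hf a (y' i)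

theorem Fintype.sum_sub_sum_eq_of_eq_off_pair {G : Type*} [AddCommGroup G] {g g' : ι → G}
    {i j : ι} (hij : i ≠ j) (h : ∀ k, k ≠ i → k ≠ j → g' k = g k) :
    ∑ k, g' k - ∑ k, g k = (g' i - g i) + (g' j - g j) := by
  rw [← sum_sub_distrib]
  exact Fintype.sum_eq_add i j hij fun k hk ↦ sub_eq_zero.2 (h k hk.1 hk.2)

theorem exists_sum_lt_of_add_two_le [DecidableEq ι] (hf : StrictMono (Δ_[1] f)) {y : ι → ℕ}
    {i j : ι} (hji : y j + 2 ≤ y i) :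
    ∃ y' : ι → ℕ, ∑ k, y' k = ∑ k, y k ∧ ∑ k, f (y' k) < ∑ k, f (y k) := by
  have hij : i ≠ j := by rintro rfl; omega
  obtain ⟨c, hc, hjc⟩ : ∃ c, y i = c + 1 ∧ y j < c := ⟨y i - 1, by omega, by omega⟩
  obtain ⟨y', off_pair, hi, hj⟩ : ∃ y' : ι → ℕ,
      (∀ k, k ≠ i → k ≠ j → y' k = y k) ∧ y' i = c ∧ y' j = y j + 1 :=
    ⟨fun k ↦ if k = i then c else if k = j then y j + 1 else y k,
      fun k hi hj ↦ by simp [hi, hj], by simp, by simp [hij.symm]⟩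
  refine ⟨y', ?_, ?_⟩
  · have hdiff := Fintype.sum_sub_sum_eq_of_eq_off_pair (g := fun k ↦ (y k : ℤ))
      (g' := fun k ↦ (y' k : ℤ)) hij fun k hi hj ↦ by simp [off_pair k hi hj]
    push_cast [hi, hj, hc] at hdiff
    zify
    linarith
  · have hdiff := Fintype.sum_sub_sum_eq_of_eq_off_pair (g := fun k ↦ f (y k))
      (g' := fun k ↦ f (y' k)) hij fun k hi hj ↦ by simp [off_pair k hi hj]
    have hincr : f (y j + 1) - f (y j) < f (c + 1) - f c := hf hjc
    simp only [hi, hj, hc] at hdiff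
    linarith

theorem isMin_sum_iff_forall_le_add_one (hf : StrictMono (Δ_[1] f)) (y : ι → ℕ) :
    (∀ y' : ι → ℕ, ∑ i, y' i = ∑ i, y i → ∑ i, f (y i) ≤ ∑ i, f (y' i)) ↔
      ∀ i j, y i ≤ y j + 1 := by
  classical
  refine ⟨fun hmin i j ↦ ?_, fun hy y' hsum ↦ sum_le_sum_of_forall_le_add_one hf.monotone hy hsum⟩
  by_contra! hji
  obtain ⟨y', hsum, hlt⟩ := exists_sum_lt_of_add_two_le hf hji
  exact (hmin y' hsum).not_gt hlt

end DiscreteConvexity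

theorem strictMono_fwdDiff_div_mul_add {φ μ : ℝ} (hφ : 0 < φ) (hμ : 0 < μ) :
    StrictMono (Δ_[1] fun k : ℕ ↦ μ / ((k : ℝ) * φ + μ)) := by
  refine strictMono_nat_of_lt_succ fun k ↦ ?_
  have hx : 0 < (k : ℝ) * φ + μ := by positivity
  simp only [fwdDiff]
  push_cast
  rw [← sub_pos]
  field_simp
  nlinarith [mul_pos (mul_pos hμ hφ) hφ]

/-- If `q = 0` (lossless sidelinks), a distribution `y` of the `N` users over the
`m` sources (with `y i` users routing through source `i`) maximizes the total
traffic `μ(m - Σ_i μ/(y_i φ + μ))` if and only if it is balanced: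
`|y i - y j| ≤ 1` for all `i, j`. -/
theorem opt_q_zero_balanced (m N : ℕ) (φ μ : ℝ) (hφ : 0 < φ) (hμ : 0 < μ)
    (y : Fin m → ℕ) (hy : ∑ i, y i = N) :
    (∀ y' : Fin m → ℕ, ∑ i, y' i = N →
        μ * ((m : ℝ) - ∑ i, μ / ((y' i : ℝ) * φ + μ)) ≤
          μ * ((m : ℝ) - ∑ i, μ / ((y i : ℝ) * φ + μ))) ↔
      (∀ i j : Fin m, |(y i : ℤ) - (y j : ℤ)| ≤ 1) := by
  have hbal : (∀ i j : Fin m, |(y i : ℤ) - (y j : ℤ)| ≤ 1) ↔ ∀ i j, y i ≤ y j + 1 :=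
    ⟨fun h i j ↦ by have := abs_le.1 (h i j); omega,
      fun h i j ↦ abs_le.2 ⟨by have := h j i; omega, by have := h i j; omega⟩⟩
  rw [hbal, ← isMin_sum_iff_forall_le_add_one (strictMono_fwdDiff_div_mul_add hφ hμ), ← hy]
  simp only [mul_le_mul_iff_right₀ hμ, sub_le_sub_iff_left]
end

section
/- A user at source s_i using the indirect path via s_l has no incentive to deviate to its direct path if and only if u_l + v_l q̄ ≤ q̄(u_i + 1 + v_i q̄) - qμ/φ. -/
/-! With loads `A = φ (u_l + v_l q̄)` and `B = φ (u_i + 1 + v_i q̄)`, the current loss rate is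
`φ (A + q μ) / (A + μ)`. Cross-multiplying against `φ B / (B + μ)`, the products `A B` cancel and
what remains is `μ (A + q μ) ≤ μ q̄ B`; dividing by `μ` and then by `φ` gives the criterion. -/

lemma add_one_sub_mul_div_add {q x μ : ℝ} (h : x + μ ≠ 0) :
    q + (1 - q) * x / (x + μ) = (x + q * μ) / (x + μ) := by
  field_simp
  ring

lemma add_mul_div_le_div_add_iff {q x y μ : ℝ} (hx : 0 < x + μ) (hy : 0 < y + μ) (hμ : 0 < μ) :
    (x + q * μ) / (x + μ) ≤ y / (y + μ) ↔ x + q * μ ≤ (1 - q) * y := by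
  have key : y * (x + μ) - (x + q * μ) * (y + μ) = μ * ((1 - q) * y - (x + q * μ)) := by ring
  rw [div_le_div_iff₀ hx hy, ← sub_nonneg, key, mul_nonneg_iff_of_pos_left hμ, sub_nonneg]

lemma mul_add_le_mul_mul_iff {φ a b c d : ℝ} (hφ : 0 < φ) :
    φ * a + c ≤ d * (φ * b) ↔ a ≤ d * b - c / φ := by
  rw [le_sub_iff_add_le, ← mul_le_mul_iff_right₀ hφ (b := a + c / φ), mul_add,
    mul_div_cancel₀ c hφ.ne', mul_left_comm]

theorem IP_no_deviation_iff_general (φ μ q : ℝ) (hφ : 0 < φ) (hμ : 0 < μ)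
    (hq1 : q < 1) (ui vi ul vl : ℕ) :
    (φ * (q + (1 - q) * ((ul : ℝ) * φ + (vl : ℝ) * (1 - q) * φ) /
          ((ul : ℝ) * φ + (vl : ℝ) * (1 - q) * φ + μ)) ≤
        φ * (((ui : ℝ) + 1) * φ + (vi : ℝ) * (1 - q) * φ) /
          (((ui : ℝ) + 1) * φ + (vi : ℝ) * (1 - q) * φ + μ)) ↔
      (ul : ℝ) + (vl : ℝ) * (1 - q) ≤
        (1 - q) * ((ui : ℝ) + 1 + (vi : ℝ) * (1 - q)) - q * μ / φ := by
  have hq : 0 ≤ 1 - q := by linarith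
  have ha : 0 ≤ (ul : ℝ) + vl * (1 - q) := by positivity
  have hb : 0 ≤ (ui : ℝ) + 1 + vi * (1 - q) := by positivity
  rw [show (ul : ℝ) * φ + vl * (1 - q) * φ = φ * (ul + vl * (1 - q)) by ring,
    show ((ui : ℝ) + 1) * φ + vi * (1 - q) * φ = φ * (ui + 1 + vi * (1 - q)) by ring,
    add_one_sub_mul_div_add (by positivity), mul_div_assoc, mul_le_mul_iff_right₀ hφ,
    add_mul_div_le_div_add_iff (by positivity) (by positivity) hμ, mul_add_le_mul_mul_iff hφ]

/-- A user at source `s_i` using the indirect path via `s_l` (current loss rate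
`φ(q + q̄(u_lφ + v_l q̄ φ)/(u_lφ + v_l q̄ φ + μ))`) has no incentive to deviate to
its direct path (post-deviation loss rate
`φ((u_i+1)φ + v_i q̄ φ)/((u_i+1)φ + v_i q̄ φ + μ)`)
if and only if `u_l + v_l q̄ ≤ q̄(u_i + 1 + v_i q̄) - qμ/φ`. -/
theorem IP_no_deviation_iff (φ μ q : ℝ) (hφ : 0 < φ) (hμ : 0 < μ)
    (hq0 : 0 < q) (hq1 : q < 1) (ui vi ul vl : ℕ) :
    (φ * (q + (1 - q) * ((ul : ℝ) * φ + (vl : ℝ) * (1 - q) * φ) /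
          ((ul : ℝ) * φ + (vl : ℝ) * (1 - q) * φ + μ)) ≤
        φ * (((ui : ℝ) + 1) * φ + (vi : ℝ) * (1 - q) * φ) /
          (((ui : ℝ) + 1) * φ + (vi : ℝ) * (1 - q) * φ + μ)) ↔
      (ul : ℝ) + (vl : ℝ) * (1 - q) ≤
        (1 - q) * ((ui : ℝ) + 1 + (vi : ℝ) * (1 - q)) - q * μ / φ :=
  IP_no_deviation_iff_general φ μ q hφ hμ hq1 ui vi ul vl
end

section
/- In the two-source game, if u_1 = n_1 and u_2 < n_2 (all users of s_1 direct, some user of s_2 relays through s_1), then the profile cannot be a Nash equilibrium. -/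
/-- Nash-equilibrium property for the two-source loss network.  Source `s_1` has
`u1` direct users and `v2` users relaying via `s_2`; source `s_2` has `u2` direct
users and `v1` users relaying via `s_1`.  Traffic rates are `T1 = u1 φ + v1 q̄ φ`
and `T2 = u2 φ + v2 q̄ φ` with `q̄ = 1 - q`.  The four conditions state that no
direct user and no relaying user can strictly decrease its loss rate by switching
its route (target traffic adjusted for the deviating user's own flow). -/
noncomputable def NE2 (φ μ q : ℝ) (u1 v1 u2 v2 : ℕ) : Prop :=
  (0 < u1 →
      φ * ((u1 : ℝ) * φ + (v1 : ℝ) * (1 - q) * φ) /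
          ((u1 : ℝ) * φ + (v1 : ℝ) * (1 - q) * φ + μ) ≤
        q * φ + (1 - q) * φ *
            ((u2 : ℝ) * φ + ((v2 : ℝ) + 1) * (1 - q) * φ) /
          ((u2 : ℝ) * φ + ((v2 : ℝ) + 1) * (1 - q) * φ + μ)) ∧
  (0 < v2 →
      q * φ + (1 - q) * φ *
          ((u2 : ℝ) * φ + (v2 : ℝ) * (1 - q) * φ) /
          ((u2 : ℝ) * φ + (v2 : ℝ) * (1 - q) * φ + μ) ≤
        φ * (((u1 : ℝ) + 1) * φ + (v1 : ℝ) * (1 - q) * φ) /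
          (((u1 : ℝ) + 1) * φ + (v1 : ℝ) * (1 - q) * φ + μ)) ∧
  (0 < u2 →
      φ * ((u2 : ℝ) * φ + (v2 : ℝ) * (1 - q) * φ) /
          ((u2 : ℝ) * φ + (v2 : ℝ) * (1 - q) * φ + μ) ≤
        q * φ + (1 - q) * φ *
            ((u1 : ℝ) * φ + ((v1 : ℝ) + 1) * (1 - q) * φ) /
          ((u1 : ℝ) * φ + ((v1 : ℝ) + 1) * (1 - q) * φ + μ)) ∧
  (0 < v1 →
      q * φ + (1 - q) * φ *
          ((u1 : ℝ) * φ + (v1 : ℝ) * (1 - q) * φ) /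
          ((u1 : ℝ) * φ + (v1 : ℝ) * (1 - q) * φ + μ) ≤
        φ * (((u2 : ℝ) + 1) * φ + (v2 : ℝ) * (1 - q) * φ) /
          (((u2 : ℝ) + 1) * φ + (v2 : ℝ) * (1 - q) * φ + μ))

section LossRates

variable {K : Type*} [Field K] [LinearOrder K] [IsStrictOrderedRing K]

theorem div_add_le_div_add_of_le {a b μ : K} (hb : 0 ≤ b) (hμ : 0 < μ) (hba : b ≤ a) :
    b / (b + μ) ≤ a / (a + μ) := by
  rw [div_le_div_iff₀ (by linarith) (by linarith)]
  nlinarith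

-- The relay's blocking probability is at least the direct one, and the sidelink loss `q` is
-- paid on top of it.
theorem direct_loss_lt_relay_loss {φ μ q a b : K} (hφ : 0 < φ) (hμ : 0 < μ) (hq0 : 0 < q)
    (hq1 : q ≤ 1) (hb : 0 ≤ b) (hba : b ≤ a) :
    φ * b / (b + μ) < q * φ + (1 - q) * φ * a / (a + μ) := by
  have hblock : b / (b + μ) ≤ a / (a + μ) := div_add_le_div_add_of_le hb hμ hba
  have hblock_lt_one : b / (b + μ) < 1 := (div_lt_one (by linarith)).2 (by linarith)
  rw [mul_div_assoc, mul_div_assoc]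
  nlinarith [mul_le_mul_of_nonneg_left hblock (mul_nonneg (sub_nonneg.2 hq1) hφ.le),
    mul_pos (mul_pos hq0 hφ) (sub_pos.2 hblock_lt_one)]

end LossRates

theorem two_source_not_NE_case1a_general (φ μ q : ℝ) (hφ : 0 < φ) (hμ : 0 < μ)
    (hq0 : 0 < q) (hq1 : q < 1) (n1 n2 u1 v1 u2 v2 : ℕ)
    (hn : n2 ≤ n1) (h1 : u1 + v2 = n1) (h2 : u2 + v1 = n2)
    (hu1 : u1 = n1) (hu2 : u2 < n2) :
    ¬ NE2 φ μ q u1 v1 u2 v2 := by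
  obtain rfl : v2 = 0 := by omega
  have hv1 : 0 < v1 := by omega
  have hu : (u2 : ℝ) + 1 ≤ u1 := by exact_mod_cast (by omega : u2 + 1 ≤ u1)
  have hrelay : 0 ≤ (v1 : ℝ) * (1 - q) * φ := by
    have := sub_pos.2 hq1
    positivity
  -- A relaying user of `s_2` going direct would load `s_2` with `(u_2 + 1) φ ≤ n_2 φ ≤ n_1 φ`,
  -- no more than the traffic on `s_1`.
  intro hNE
  refine (hNE.2.2.2 hv1).not_gt (direct_loss_lt_relay_loss hφ hμ hq0 hq1.le ?_ ?_)
  · positivity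
  · push_cast
    nlinarith

/-- In the two-source game (with `n1 ≥ n2 ≥ 1`, `u1 + v2 = n1`, `u2 + v1 = n2`),
if `u1 = n1` and `u2 < n2` (all users of `s_1` direct, some user of `s_2` relays
through `s_1`), then the profile cannot be a Nash equilibrium. -/
theorem two_source_not_NE_case1a (φ μ q : ℝ) (hφ : 0 < φ) (hμ : 0 < μ)
    (hq0 : 0 < q) (hq1 : q < 1) (n1 n2 u1 v1 u2 v2 : ℕ)
    (hn : n2 ≤ n1) (hn2 : 1 ≤ n2) (h1 : u1 + v2 = n1) (h2 : u2 + v1 = n2)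
    (hu1 : u1 = n1) (hu2 : u2 < n2) :
    ¬ NE2 φ μ q u1 v1 u2 v2 :=
  two_source_not_NE_case1a_general φ μ q hφ hμ hq0 hq1 n1 n2 u1 v1 u2 v2 hn h1 h2 hu1 hu2
end

section
/- In the two-source game, the all-direct profile (u_1 = n_1, u_2 = n_2) is a Nash equilibrium if and only if n_1 q̄ ≤ qμ/φ + n_2 + q̄. -/
/-! Clearing the denominators `A + μ` and `B + μ` turns the comparison of the loss rate
`φ A / (A + μ)` of a direct user with the loss rate `q φ + q̄ φ B / (B + μ)` of a relayed one
into `φ μ (B + q μ - q̄ A) ≥ 0`, a linear condition on the traffics `A` and `B`. For the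
all-direct profile the deviation from the smaller source is then never profitable, and the
one from the larger source is profitable exactly when the stated bound fails. -/

lemma direct_loss_le_relay_loss_iff {φ μ q A B : ℝ} (hφ : 0 < φ) (hμ : 0 < μ)
    (hA : 0 ≤ A) (hB : 0 ≤ B) :
    φ * A / (A + μ) ≤ q * φ + (1 - q) * φ * B / (B + μ) ↔ (1 - q) * A ≤ B + q * μ := by
  have hAμ : 0 < A + μ := by positivity
  have hBμ : 0 < B + μ := by positivity
  have cross : (q * φ * (B + μ) + (1 - q) * φ * B) * (A + μ) - φ * A * (B + μ) =
      φ * μ * (B + q * μ - (1 - q) * A) := by ring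
  rw [add_div' _ _ _ hBμ.ne', div_le_div_iff₀ hAμ hBμ, ← sub_nonneg, cross,
    mul_nonneg_iff_of_pos_left (by positivity), sub_nonneg]

/-- In the two-source game, the all-direct profile (`u1 = n1`, `u2 = n2`,
no relaying) is a Nash equilibrium iff `n1 q̄ ≤ qμ/φ + n2 + q̄`. -/
theorem two_source_all_direct_NE_iff (φ μ q : ℝ) (hφ : 0 < φ) (hμ : 0 < μ)
    (hq0 : 0 ≤ q) (hq1 : q ≤ 1) (n1 n2 : ℕ) (hn : n2 ≤ n1) (hn2 : 1 ≤ n2) :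
    NE2 φ μ q n1 0 n2 0 ↔
      (n1 : ℝ) * (1 - q) ≤ q * μ / φ + (n2 : ℝ) + (1 - q) := by
  have hq' : 0 ≤ 1 - q := by linarith
  simp only [NE2, Nat.cast_zero, zero_mul, add_zero, zero_add, one_mul, lt_irrefl,
    false_implies, true_and, and_true, show 0 < n2 by omega, show 0 < n1 by omega, true_implies]
  rw [direct_loss_le_relay_loss_iff hφ hμ (by positivity) (by positivity),
    direct_loss_le_relay_loss_iff hφ hμ (by positivity) (by positivity)]
  have from_smaller : (1 - q) * (n2 * φ) ≤ n1 * φ + (1 - q) * φ + q * μ :=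
    calc (1 - q) * (n2 * φ) ≤ n2 * φ := mul_le_of_le_one_left (by positivity) (by linarith)
      _ ≤ n1 * φ := by gcongr
      _ ≤ n1 * φ + (1 - q) * φ + q * μ := by
        linarith [mul_nonneg hq' hφ.le, mul_nonneg hq0 hμ.le]
  rw [and_iff_left from_smaller, div_add' _ _ _ hφ.ne', div_add' _ _ _ hφ.ne', le_div_iff₀ hφ]
  constructor <;> intro h <;> linarith
end

section
/- For any two-source instance with n_1q̄ > qμ/φ + n_2 + q̄, the interval [t_1(n_2) - 1, t_1(n_2)] contains an integer m̃ with 0 < m̃ < n_1, and the profile with u_1 = m̃, u_2 = n_2 is a Nash equilibrium; consequently, every two-source game admits a pure Nash equilibrium with u_1 > 0 and u_2 = n_2. -/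
/-!
A direct user of a source with traffic `X` loses at rate `φ X / (X + μ)`, a user relaying through
a source with traffic `Y` at rate `q φ + (1 - q) φ Y / (Y + μ)`; their difference has the sign of
`q μ + Y - (1 - q) X`, so every Nash condition is a linear inequality in the profile. With all
users of `s_2` direct and `u_1` direct users at `s_1`, the two conditions on the users of `s_1`
read `u_1 ≤ t_1` and `t_1 - 1 ≤ u_1`, and the second implies the condition on the users of `s_2`.
If `t_1 < n_1` the integer `⌊t_1⌋` lies in `(0, n_1)`; otherwise the all-direct profile
`u_1 = n_1` is an equilibrium.
-/

theorem exists_nat_pos_lt_mem_Icc_sub_one {R : Type*} [Ring R] [LinearOrder R]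
    [IsStrictOrderedRing R] [FloorSemiring R] {T : R} {n : ℕ} (h1 : 1 ≤ T) (hn : T < n) :
    ∃ m : ℕ, 0 < m ∧ m < n ∧ (m : R) ∈ Set.Icc (T - 1) T :=
  have hT : 0 ≤ T := zero_le_one.trans h1
  ⟨⌊T⌋₊, Nat.floor_pos.2 h1, (Nat.floor_lt hT).2 hn, (Nat.sub_one_lt_floor T).le, Nat.floor_le hT⟩

section LossRates

variable {φ μ q X Y : ℝ}

theorem relayLoss_sub_directLoss (hX : X + μ ≠ 0) (hY : Y + μ ≠ 0) :
    q * φ + (1 - q) * φ * Y / (Y + μ) - φ * X / (X + μ) =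
      φ * μ / ((X + μ) * (Y + μ)) * (q * μ + Y - (1 - q) * X) := by
  field_simp
  ring

theorem directLoss_le_relayLoss_iff (hφ : 0 < φ) (hμ : 0 < μ) (hX : 0 < X + μ) (hY : 0 < Y + μ) :
    φ * X / (X + μ) ≤ q * φ + (1 - q) * φ * Y / (Y + μ) ↔ (1 - q) * X ≤ q * μ + Y := by
  rw [← sub_nonneg, relayLoss_sub_directLoss hX.ne' hY.ne',
    mul_nonneg_iff_of_pos_left (by positivity), sub_nonneg]

theorem relayLoss_le_directLoss_iff (hφ : 0 < φ) (hμ : 0 < μ) (hX : 0 < X + μ) (hY : 0 < Y + μ) :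
    q * φ + (1 - q) * φ * Y / (Y + μ) ≤ φ * X / (X + μ) ↔ q * μ + Y ≤ (1 - q) * X := by
  rw [← sub_nonpos, relayLoss_sub_directLoss hX.ne' hY.ne', ← mul_zero (φ * μ / _),
    mul_le_mul_iff_of_pos_left (by positivity), sub_nonpos]

end LossRates

section Equilibria

variable {φ μ q : ℝ}

theorem NE2_iff (hφ : 0 < φ) (hμ : 0 < μ) (hq : q ≤ 1) (u1 v1 u2 v2 : ℕ) :
    NE2 φ μ q u1 v1 u2 v2 ↔
      (0 < u1 → (1 - q) * (u1 * φ + v1 * (1 - q) * φ) ≤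
        q * μ + (u2 * φ + (v2 + 1) * (1 - q) * φ)) ∧
      (0 < v2 → q * μ + (u2 * φ + v2 * (1 - q) * φ) ≤
        (1 - q) * ((u1 + 1) * φ + v1 * (1 - q) * φ)) ∧
      (0 < u2 → (1 - q) * (u2 * φ + v2 * (1 - q) * φ) ≤
        q * μ + (u1 * φ + (v1 + 1) * (1 - q) * φ)) ∧
      (0 < v1 → q * μ + (u1 * φ + v1 * (1 - q) * φ) ≤
        (1 - q) * ((u2 + 1) * φ + v2 * (1 - q) * φ)) := by
  have traffic_add_pos (u v : ℝ) (hu : 0 ≤ u) (hv : 0 ≤ v) : 0 < u * φ + v * (1 - q) * φ + μ := by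
    have : 0 ≤ 1 - q := sub_nonneg.2 hq
    positivity
  refine and_congr (imp_congr_right fun _ => directLoss_le_relayLoss_iff hφ hμ
      (traffic_add_pos _ _ ?_ ?_) (traffic_add_pos _ _ ?_ ?_)) <|
    and_congr (imp_congr_right fun _ => relayLoss_le_directLoss_iff hφ hμ
      (traffic_add_pos _ _ ?_ ?_) (traffic_add_pos _ _ ?_ ?_)) <|
    and_congr (imp_congr_right fun _ => directLoss_le_relayLoss_iff hφ hμ
      (traffic_add_pos _ _ ?_ ?_) (traffic_add_pos _ _ ?_ ?_)) <|
    imp_congr_right fun _ => relayLoss_le_directLoss_iff hφ hμ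
      (traffic_add_pos _ _ ?_ ?_) (traffic_add_pos _ _ ?_ ?_)
  all_goals positivity

theorem NE2_of_sub_one_le_of_le (hφ : 0 < φ) (hμ : 0 < μ) (hq0 : 0 ≤ q) (hq1 : q < 1)
    {n1 n2 a : ℕ} {T : ℝ} (hT : 2 * (1 - q) * T * φ = q * μ + (n2 + (n1 + 1) * (1 - q)) * φ)
    (ha : a ≤ n1) (hlo : T - 1 ≤ a) (hhi : a ≤ T) :
    NE2 φ μ q a 0 n2 (n1 - a) := by
  have hscale : 0 ≤ 2 * (1 - q) * φ := by have := sub_pos.2 hq1; positivity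
  rw [NE2_iff hφ hμ hq1.le]
  push_cast [Nat.cast_sub ha, zero_mul, add_zero, zero_add, one_mul]
  have hna : (0 : ℝ) ≤ n1 - a := sub_nonneg.2 (Nat.cast_le.2 ha)
  have relay_s2 : q * μ + (n2 * φ + (n1 - a) * (1 - q) * φ) ≤
      (1 - q) * ((a + 1) * φ) := by
    linarith [mul_le_mul_of_nonneg_left hlo hscale]
  refine ⟨fun _ => ?_, fun _ => relay_s2, fun _ => ?_, False.elim⟩
  · linarith [mul_le_mul_of_nonneg_left hhi hscale]
  · have hs2 : 0 ≤ n2 * φ + (n1 - a) * (1 - q) * φ := by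
      have := sub_pos.2 hq1; positivity
    linarith [mul_nonneg hq0 hs2, mul_nonneg hq0 (mul_nonneg (Nat.cast_nonneg a) hφ.le),
      mul_nonneg hq0 hμ.le]

theorem NE2_all_direct_of_le (hφ : 0 < φ) (hμ : 0 < μ) (hq0 : 0 ≤ q) (hq1 : q < 1)
    {n1 n2 : ℕ} {T : ℝ} (hT : 2 * (1 - q) * T * φ = q * μ + (n2 + (n1 + 1) * (1 - q)) * φ)
    (hn : n2 ≤ n1) (hle : n1 ≤ T) :
    NE2 φ μ q n1 0 n2 0 := by
  have hscale : 0 ≤ 2 * (1 - q) * φ := by have := sub_pos.2 hq1; positivity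
  rw [NE2_iff hφ hμ hq1.le]
  push_cast [zero_mul, add_zero, zero_add, one_mul]
  refine ⟨fun _ => ?_, False.elim, fun _ => ?_, False.elim⟩
  · linarith [mul_le_mul_of_nonneg_left hle hscale]
  · linarith [mul_le_mul_of_nonneg_right (Nat.cast_le (α := ℝ).2 hn) hφ.le,
      mul_nonneg hq0 (mul_nonneg (Nat.cast_nonneg n2) hφ.le), mul_nonneg hq0 hμ.le]

end Equilibria

/-- Existence of a pure Nash equilibrium in the two-source game.  If
`n1 q̄ > qμ/φ + n2 + q̄`, then the interval `[t1(n2) - 1, t1(n2)]` (with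
`t1(u2) = (qμ/φ + u2(1+q̄²) + (n1+1)q̄ - n2 q̄²)/(2q̄)`) contains an integer `m̃`
with `0 < m̃ < n1`, and the profile `u1 = m̃`, `u2 = n2` (so `v1 = 0`,
`v2 = n1 - m̃`) is a Nash equilibrium.  Consequently, every two-source game
admits a pure Nash equilibrium with `u1 > 0` and `u2 = n2`. -/
theorem two_source_NE_exists (φ μ q : ℝ) (hφ : 0 < φ) (hμ : 0 < μ)
    (hq0 : 0 < q) (hq1 : q < 1) (n1 n2 : ℕ) (hn : n2 ≤ n1) (hn2 : 1 ≤ n2)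
    (t1 : ℝ)
    (ht1 : t1 = (q * μ / φ + (n2 : ℝ) * (1 + (1 - q) ^ 2) +
        ((n1 : ℝ) + 1) * (1 - q) - (n2 : ℝ) * (1 - q) ^ 2) / (2 * (1 - q))) :
    (((n1 : ℝ) * (1 - q) > q * μ / φ + (n2 : ℝ) + (1 - q)) →
      ∃ mt : ℕ, 0 < mt ∧ mt < n1 ∧
        t1 - 1 ≤ (mt : ℝ) ∧ (mt : ℝ) ≤ t1 ∧
        NE2 φ μ q mt 0 n2 (n1 - mt)) ∧
    (∃ u1 : ℕ, 0 < u1 ∧ u1 ≤ n1 ∧ NE2 φ μ q u1 0 n2 (n1 - u1)) := by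
  have hq : 0 < 1 - q := sub_pos.2 hq1
  have hT : 2 * (1 - q) * t1 * φ = q * μ + (n2 + (n1 + 1) * (1 - q)) * φ := by
    rw [ht1]
    field_simp
    ring
  have one_le : 1 ≤ t1 := by
    rw [ht1, le_div_iff₀ (by positivity)]
    have : (1 : ℝ) ≤ n2 := Nat.one_le_cast.2 hn2
    linarith [div_pos (mul_pos hq0 hμ) hφ, mul_nonneg (Nat.cast_nonneg (α := ℝ) n1) hq.le]
  have lt_iff : t1 < n1 ↔ (n1 : ℝ) * (1 - q) > q * μ / φ + n2 + (1 - q) := by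
    rw [ht1, div_lt_iff₀ (by positivity)]
    constructor <;> intro h <;> linarith
  have interior (h : t1 < n1) : ∃ mt : ℕ, 0 < mt ∧ mt < n1 ∧
      t1 - 1 ≤ (mt : ℝ) ∧ (mt : ℝ) ≤ t1 ∧ NE2 φ μ q mt 0 n2 (n1 - mt) := by
    obtain ⟨mt, hpos, hlt, hlo, hhi⟩ := exists_nat_pos_lt_mem_Icc_sub_one one_le h
    exact ⟨mt, hpos, hlt, hlo, hhi, NE2_of_sub_one_le_of_le hφ hμ hq0.le hq1 hT hlt.le hlo hhi⟩
  refine ⟨fun h => interior (lt_iff.2 h), ?_⟩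
  rcases lt_or_ge t1 n1 with h | h
  · obtain ⟨mt, hpos, hlt, -, -, hNE⟩ := interior h
    exact ⟨mt, hpos, hlt.le, hNE⟩
  · refine ⟨n1, hn2.trans hn, le_rfl, ?_⟩
    simpa using NE2_all_direct_of_le hφ hμ hq0.le hq1 hT hn h
end
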